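/- arXiv:2605.06389 — 6 statements merged into one kernel-verified Lean document; each statement's English description precedes it below -/
import Mathlib

section
/- Let n, m, s, ℓ be positive integers with n = (m+1)s − ℓ and let L ⊆ [n] with |L| = ℓ − 1. Then the family P(m,s,ℓ;L) = {A ⊆ [n] : |A| + |A ∩ L| ≥ m+1} contains no s pairwise disjoint members. -/
theorem stmt_0 (m s ℓ n : ℕ) (hm : 1 ≤ m) (hs : 1 ≤ s) (hℓ : 1 ≤ ℓ) (hℓs : ℓ ≤ s)
    (hn : n = (m + 1) * s - ℓ) (hn1 : 1 ≤ n)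
    (L : Finset (Fin n)) (hL : L.card = ℓ - 1) :
    ¬ ∃ M : Finset (Finset (Fin n)),
      (∀ A ∈ M, m + 1 ≤ A.card + (A ∩ L).card) ∧ M.card = s ∧
      (M : Set (Finset (Fin n))).PairwiseDisjoint id := by
  rintro ⟨M, hmem, hcard, hdisj⟩
  have h1 : ∀ A ∈ M, ∀ B ∈ M, A ≠ B → Disjoint A B := fun A hA B hB hAB => hdisj hA hB hAB
  have hsum1 : ∑ A ∈ M, A.card = (M.biUnion id).card := (Finset.card_biUnion h1).symm
  have hsum2 : ∑ A ∈ M, (A ∩ L).card = (M.biUnion (· ∩ L)).card :=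
    (Finset.card_biUnion (fun A hA B hB hAB =>
      (h1 A hA B hB hAB).mono inf_le_left inf_le_left)).symm
  have hb1 : (M.biUnion id).card ≤ n := le_trans (Finset.card_le_univ _) (by simp)
  have hb2 : (M.biUnion (· ∩ L)).card ≤ ℓ - 1 := by
    rw [← hL]
    apply Finset.card_le_card
    intro x hx
    simp only [Finset.mem_biUnion, Finset.mem_inter] at hx
    obtain ⟨A, _, _, h⟩ := hx
    exact h
  have hlow : (m + 1) * s ≤ ∑ A ∈ M, (A.card + (A ∩ L).card) := by
    calc (m + 1) * s = ∑ _A ∈ M, (m + 1) := by rw [Finset.sum_const, hcard]; ring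
    _ ≤ _ := Finset.sum_le_sum hmem
  rw [Finset.sum_add_distrib, hsum1, hsum2] at hlow
  have : ℓ ≤ (m + 1) * s := le_trans hℓs (Nat.le_mul_of_pos_left s (by omega))
  omega
end

section
/- Let n, s, ℓ be positive integers with n = 4s − ℓ and 1 ≤ ℓ ≤ s, and let L' ⊆ [n] with |L'| = 3ℓ − 1. Then the family P'(s,ℓ;L') consisting of all 3-element subsets of L' together with all subsets of [n] of size at least 4 contains no s pairwise disjoint members. -/
theorem stmt_1 (s ℓ n : ℕ) (hs : 1 ≤ s) (hℓ : 1 ≤ ℓ) (hℓs : ℓ ≤ s)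
    (hn : n = 4 * s - ℓ) (hn1 : 1 ≤ n)
    (L' : Finset (Fin n)) (hL' : L'.card = 3 * ℓ - 1) :
    ¬ ∃ M : Finset (Finset (Fin n)),
      (∀ A ∈ M, (A.card = 3 ∧ A ⊆ L') ∨ 4 ≤ A.card) ∧ M.card = s ∧
      (M : Set (Finset (Fin n))).PairwiseDisjoint id := by
  classical
  rintro ⟨M, hM, hcard, hdisj⟩
  set M3 := M.filter (fun A => A.card = 3) with hM3
  set M4 := M.filter (fun A => ¬ A.card = 3) with hM4
  have hsplit : M3.card + M4.card = s := by
    rw [hM3, hM4, Finset.card_filter_add_card_filter_not, hcard]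
  have hdisjM : ∀ x ∈ M, ∀ y ∈ M, x ≠ y → Disjoint (id x) (id y) := by
    intro x hx y hy hxy
    exact hdisj (by exact_mod_cast hx) (by exact_mod_cast hy) hxy
  -- 3 * M3.card ≤ 3ℓ - 1
  have h3sub : ∀ A ∈ M3, A ⊆ L' := by
    intro A hA
    rw [hM3, Finset.mem_filter] at hA
    rcases hM A hA.1 with ⟨_, h⟩ | h
    · exact h
    · exact absurd hA.2 (by omega)
  have h3 : 3 * M3.card ≤ 3 * ℓ - 1 := by
    have hb : (M3.biUnion id).card = ∑ A ∈ M3, A.card := by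
      apply Finset.card_biUnion
      intro x hx y hy hxy
      exact hdisjM x (Finset.filter_subset _ _ hx) y (Finset.filter_subset _ _ hy) hxy
    have hsum : ∑ A ∈ M3, A.card = 3 * M3.card := by
      rw [Finset.sum_congr rfl (fun A hA => (Finset.mem_filter.mp hA).2),
        Finset.sum_const, smul_eq_mul, mul_comm]
    have hsubU : M3.biUnion id ⊆ L' := by
      intro x hx
      rcases Finset.mem_biUnion.mp hx with ⟨A, hA, hxA⟩
      exact h3sub A hA hxA
    calc 3 * M3.card = (M3.biUnion id).card := by rw [hb, hsum]
      _ ≤ L'.card := Finset.card_le_card hsubU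
      _ = 3 * ℓ - 1 := hL'
  -- total count
  have htot : 3 * M3.card + 4 * M4.card ≤ n := by
    have hb : (M.biUnion id).card = ∑ A ∈ M, A.card := Finset.card_biUnion hdisjM
    have h4 : 4 * M4.card ≤ ∑ A ∈ M4, A.card := by
      have : ∀ A ∈ M4, 4 ≤ A.card := by
        intro A hA
        rw [hM4, Finset.mem_filter] at hA
        rcases hM A hA.1 with ⟨h, _⟩ | h
        · exact absurd h hA.2
        · exact h
      calc 4 * M4.card = M4.card * 4 := by ring
        _ ≤ ∑ A ∈ M4, A.card := Finset.card_nsmul_le_sum M4 _ 4 this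
    have hsum3 : ∑ A ∈ M3, A.card = 3 * M3.card := by
      rw [Finset.sum_congr rfl (fun A hA => (Finset.mem_filter.mp hA).2),
        Finset.sum_const, smul_eq_mul, mul_comm]
    have hsplitsum : ∑ A ∈ M3, A.card + ∑ A ∈ M4, A.card = ∑ A ∈ M, A.card := by
      rw [hM3, hM4]; exact Finset.sum_filter_add_sum_filter_not M _ _
    have hle : ∑ A ∈ M, A.card ≤ n := by
      rw [← hb]
      calc (M.biUnion id).card ≤ Fintype.card (Fin n) := Finset.card_le_univ _
        _ = n := Fintype.card_fin n
    omega
  omega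
end

section
/- Let q ≥ 2, let X be a finite set with |X| = qt + d where t ≥ 1 and d ≥ 0, let G ⊆ binom(X, q), and set Z = binom(X, q) \ G. If G contains no t pairwise disjoint members, then |Z| ≥ (1/t)·binom(qt+d, q). -/
/-- count function: number of ordered s-tuples of pairwise disjoint q-subsets
of an n-element set. -/
def tupf (q : ℕ) : ℕ → ℕ → ℕ
  | 0, _ => 1
  | (s+1), n => n.choose q * tupf q s (n - q)

/-- тuples: lists of length s of pairwise disjoint q-subsets of Y. -/
def tuples {α : Type*} [DecidableEq α] (q : ℕ) : ℕ → Finset α → Finset (List (Finset α))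
  | 0, _ => {[]}
  | (s+1), Y => (Y.powersetCard q).biUnion fun A => ((tuples q s) (Y \ A)).image (A :: ·)

lemma mem_tuples_iff {α : Type*} [DecidableEq α] (q : ℕ) :
    ∀ (s : ℕ) (Y : Finset α) (l : List (Finset α)),
    l ∈ tuples q s Y ↔
      l.length = s ∧ l.Pairwise Disjoint ∧ ∀ A ∈ l, A ⊆ Y ∧ A.card = q := by
  intro s
  induction s with
  | zero =>
    intro Y l
    simp [tuples, List.length_eq_zero_iff]
    rintro rfl; simp
  | succ s ih =>
    intro Y l
    simp only [tuples, Finset.mem_biUnion, Finset.mem_image, Finset.mem_powersetCard]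
    constructor
    · rintro ⟨A, ⟨hAY, hAq⟩, r, hr, rfl⟩
      obtain ⟨hlen, hpw, hmem⟩ := (ih (Y \ A) r).mp hr
      refine ⟨by simp [hlen], ?_, ?_⟩
      · refine List.Pairwise.cons ?_ hpw
        intro B hB
        have := (hmem B hB).1
        exact (Finset.subset_sdiff.mp this).2.symm
      · intro B hB
        rcases List.mem_cons.mp hB with rfl | hB'
        · exact ⟨hAY, hAq⟩
        · obtain ⟨h1, h2⟩ := hmem B hB'
          exact ⟨h1.trans Finset.sdiff_subset, h2⟩
    · rintro ⟨hlen, hpw, hmem⟩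
      obtain ⟨B, r, rfl⟩ : ∃ B r, l = B :: r := by
        cases l with
        | nil => simp at hlen
        | cons B r => exact ⟨B, r, rfl⟩
      obtain ⟨hBY, hBq⟩ := hmem B (by simp)
      refine ⟨B, ⟨hBY, hBq⟩, r, ?_, rfl⟩
      rw [ih]
      refine ⟨by simpa using hlen, hpw.of_cons, ?_⟩
      intro A hA
      obtain ⟨hAY, hAq⟩ := hmem A (by simp [hA])
      refine ⟨Finset.subset_sdiff.mpr ⟨hAY, ?_⟩, hAq⟩
      exact ((List.pairwise_cons.mp hpw).1 A hA).symm

lemma card_tuples {α : Type*} [DecidableEq α] (q : ℕ) :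
    ∀ (s : ℕ) (Y : Finset α), (tuples q s Y).card = tupf q s Y.card := by
  intro s
  induction s with
  | zero => intro Y; simp [tuples, tupf]
  | succ s ih =>
    intro Y
    rw [tuples, tupf, Finset.card_biUnion]
    · rw [Finset.sum_congr rfl (fun A hA => ?_), Finset.sum_const,
        Finset.card_powersetCard, smul_eq_mul]
      rw [Finset.card_image_of_injective _ (fun a b h => by simpa using h), ih]
      congr 1
      rw [Finset.card_sdiff_of_subset (Finset.mem_powersetCard.mp hA).1,
        (Finset.mem_powersetCard.mp hA).2]
    · intro A hA B hB hAB
      simp only [Finset.disjoint_left, Finset.mem_image]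
      rintro l ⟨r, _, rfl⟩ ⟨r', _, h⟩
      injection h with h1 h2
      exact hAB h1.symm

lemma tupf_pos (q : ℕ) : ∀ (s n : ℕ), q * s ≤ n → 0 < tupf q s n := by
  intro s
  induction s with
  | zero => intro n _; simp [tupf]
  | succ s ih =>
    intro n h
    rw [tupf]
    rw [Nat.mul_succ] at h
    exact Nat.mul_pos (Nat.choose_pos (by omega)) (ih _ (by omega))

lemma nodup_of_pairwise_disjoint {α : Type*} [DecidableEq α]
    {l : List (Finset α)} (hpw : l.Pairwise Disjoint)
    (hne : ∀ A ∈ l, A.Nonempty) : l.Nodup := by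
  refine hpw.imp_of_mem (fun {a b} ha hb hab => ?_)
  rintro rfl
  exact (hne a ha).ne_empty (disjoint_self.mp hab)

lemma not_mem_eraseIdx_self {β : Type*} :
    ∀ (l : List β) (i : ℕ) (hi : i < l.length), l.Nodup → l[i] ∉ l.eraseIdx i := by
  intro l
  induction l with
  | nil => intro i hi; simp at hi
  | cons x xs ih =>
    intro i hi hnd
    cases i with
    | zero => simpa using (List.nodup_cons.mp hnd).1
    | succ i =>
      simp only [List.eraseIdx_cons_succ, List.mem_cons, List.getElem_cons_succ]
      push_neg
      refine ⟨?_, ih i (by simpa using hi) (List.nodup_cons.mp hnd).2⟩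
      intro h
      exact (List.nodup_cons.mp hnd).1 (h ▸ List.getElem_mem _)

lemma eraseIdx_inj {β : Type*} {l₁ l₂ : List β} {i : ℕ}
    (h₁ : i < l₁.length) (h₂ : i < l₂.length)
    (he : l₁.eraseIdx i = l₂.eraseIdx i) (hg : l₁[i] = l₂[i]) : l₁ = l₂ := by
  rw [List.eraseIdx_eq_take_drop_succ, List.eraseIdx_eq_take_drop_succ] at he
  have hlen : (List.take i l₁).length = (List.take i l₂).length := by
    simp [List.length_take]; omega
  obtain ⟨ht, hd⟩ := List.append_inj he hlen
  calc l₁ = List.take i l₁ ++ List.drop i l₁ := (List.take_append_drop i l₁).symm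
    _ = List.take i l₁ ++ (l₁[i] :: List.drop (i+1) l₁) := by
        rw [List.drop_eq_getElem_cons h₁]
    _ = List.take i l₂ ++ (l₂[i] :: List.drop (i+1) l₂) := by rw [ht, hd, hg]
    _ = List.take i l₂ ++ List.drop i l₂ := by rw [List.drop_eq_getElem_cons h₂]
    _ = l₂ := List.take_append_drop i l₂

theorem stmt_3 {α : Type*} [DecidableEq α] (q t d : ℕ) (hq : 2 ≤ q) (ht : 1 ≤ t)
    (X : Finset α) (hX : X.card = q * t + d)
    (G : Finset (Finset α)) (hG : G ⊆ X.powersetCard q)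
    (Z : Finset (Finset α)) (hZ : Z = X.powersetCard q \ G)
    (hν : ¬ ∃ M : Finset (Finset α), M ⊆ G ∧ M.card = t ∧
      (M : Set (Finset α)).PairwiseDisjoint id) :
    ((q * t + d).choose q : ℝ) / t ≤ Z.card := by
  set n := q * t + d with hn
  set P := tuples q t X with hP
  -- every tuple in P contains a member of Z
  have key : ∀ l ∈ P, ∃ A ∈ Z, A ∈ l := by
    intro l hl
    obtain ⟨hlen, hpw, hmem⟩ := (mem_tuples_iff q t X l).mp hl
    by_contra hcon
    push_neg at hcon
    have hG' : ∀ A ∈ l, A ∈ G := by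
      intro A hA
      have hp : A ∈ X.powersetCard q := Finset.mem_powersetCard.mpr (hmem A hA)
      by_contra hAG
      exact hcon A (hZ ▸ Finset.mem_sdiff.mpr ⟨hp, hAG⟩) hA
    have hnd : l.Nodup := nodup_of_pairwise_disjoint hpw
      (fun A hA => Finset.card_pos.mp (by rw [(hmem A hA).2]; omega))
    refine hν ⟨l.toFinset, ?_, ?_, ?_⟩
    · intro A hA; exact hG' A (List.mem_toFinset.mp hA)
    · rw [List.toFinset_card_of_nodup hnd, hlen]
    · intro a ha b hb hab
      simp only [List.coe_toFinset, Set.mem_setOf_eq] at ha hb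
      haveI : Std.Symm (Disjoint : Finset α → Finset α → Prop) := ⟨fun _ _ h => h.symm⟩
      exact hpw.forall ha hb hab
  -- fibers
  have fiber_bound : ∀ A ∈ Z, ∀ i ∈ Finset.range t,
      (P.filter (fun l => l.getD i ∅ = A)).card ≤ tupf q (t-1) (n - q) := by
    intro A hA i hi
    have hAX : A ⊆ X ∧ A.card = q := by
      rw [hZ] at hA
      exact Finset.mem_powersetCard.mp (Finset.mem_sdiff.mp hA).1
    have hcard : (X \ A).card = n - q := by
      rw [Finset.card_sdiff_of_subset hAX.1, hX, hAX.2]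
    have := card_tuples q (t-1) (X \ A)
    rw [hcard] at this
    rw [← this]
    apply Finset.card_le_card_of_injOn (fun l => l.eraseIdx i)
    · intro l hl
      obtain ⟨hlP, hli⟩ := Finset.mem_filter.mp hl
      obtain ⟨hlen, hpw, hmem⟩ := (mem_tuples_iff q t X l).mp hlP
      have hit : i < l.length := by rw [hlen]; exact Finset.mem_range.mp hi
      have hgA : l[i] = A := by rw [← List.getD_eq_getElem l ∅ hit]; exact hli
      have hnd : l.Nodup := nodup_of_pairwise_disjoint hpw
        (fun B hB => Finset.card_pos.mp (by rw [(hmem B hB).2]; omega))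
      rw [Finset.mem_coe, mem_tuples_iff]
      refine ⟨by rw [List.length_eraseIdx, if_pos hit, hlen], ?_, ?_⟩
      · exact hpw.sublist (List.eraseIdx_sublist l i)
      · intro B hB
        have hBl : B ∈ l := (List.eraseIdx_sublist l i).subset hB
        have hBA : B ≠ A := by
          rintro rfl
          exact not_mem_eraseIdx_self l i hit hnd (hgA ▸ hB)
        have hdisj : Disjoint B A :=
          haveI : Std.Symm (Disjoint : Finset α → Finset α → Prop) := ⟨fun _ _ h => h.symm⟩
          hpw.forall hBl (hgA ▸ List.getElem_mem hit) hBA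
        exact ⟨Finset.subset_sdiff.mpr ⟨(hmem B hBl).1, hdisj⟩, (hmem B hBl).2⟩
    · intro l₁ hl₁ l₂ hl₂ he
      simp only [Finset.coe_filter, Set.mem_setOf_eq] at hl₁ hl₂
      have hlen₁ := ((mem_tuples_iff q t X l₁).mp hl₁.1).1
      have hlen₂ := ((mem_tuples_iff q t X l₂).mp hl₂.1).1
      have hit₁ : i < l₁.length := by rw [hlen₁]; exact Finset.mem_range.mp hi
      have hit₂ : i < l₂.length := by rw [hlen₂]; exact Finset.mem_range.mp hi
      refine eraseIdx_inj hit₁ hit₂ he ?_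
      rw [← List.getD_eq_getElem l₁ ∅ hit₁, ← List.getD_eq_getElem l₂ ∅ hit₂,
        hl₁.2, hl₂.2]
  -- main counting
  have hPsub : P ⊆ (Z ×ˢ Finset.range t).biUnion
      (fun p => P.filter (fun l => l.getD p.2 ∅ = p.1)) := by
    intro l hl
    obtain ⟨A, hAZ, hAl⟩ := key l hl
    obtain ⟨j, hj, hgj⟩ := List.mem_iff_getElem.mp hAl
    have hlen := ((mem_tuples_iff q t X l).mp hl).1
    refine Finset.mem_biUnion.mpr ⟨(A, j), ?_, ?_⟩
    · exact Finset.mem_product.mpr ⟨hAZ, Finset.mem_range.mpr (hlen ▸ hj)⟩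
    · exact Finset.mem_filter.mpr ⟨hl, by rw [List.getD_eq_getElem l ∅ hj, hgj]⟩
  have hPcard : P.card = tupf q t n := by rw [hP, card_tuples, hX]
  have hchain : tupf q t n ≤ Z.card * t * tupf q (t-1) (n - q) := by
    calc tupf q t n = P.card := hPcard.symm
      _ ≤ ((Z ×ˢ Finset.range t).biUnion
            (fun p => P.filter (fun l => l.getD p.2 ∅ = p.1))).card :=
          Finset.card_le_card hPsub
      _ ≤ ∑ p ∈ Z ×ˢ Finset.range t, (P.filter (fun l => l.getD p.2 ∅ = p.1)).card :=
          Finset.card_biUnion_le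
      _ ≤ ∑ _p ∈ Z ×ˢ Finset.range t, tupf q (t-1) (n - q) := by
          refine Finset.sum_le_sum ?_
          rintro ⟨A, i⟩ hp
          obtain ⟨hAZ, hi⟩ := Finset.mem_product.mp hp
          exact fiber_bound A hAZ i hi
      _ = Z.card * t * tupf q (t-1) (n - q) := by
          rw [Finset.sum_const, smul_eq_mul, Finset.card_product, Finset.card_range]
  have hsplit : tupf q t n = n.choose q * tupf q (t-1) (n - q) := by
    obtain ⟨t', rfl⟩ : ∃ t', t = t' + 1 := ⟨t - 1, by omega⟩
    simp [tupf]
  have hpos : 0 < tupf q (t-1) (n - q) := tupf_pos q (t-1) (n - q) (by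
    have h : q * (t-1) + q = q * t := by
      rw [← Nat.mul_succ, Nat.succ_eq_add_one, Nat.sub_add_cancel ht]
    omega)
  have hfinal : n.choose q ≤ Z.card * t := by
    rw [hsplit] at hchain
    exact Nat.le_of_mul_le_mul_right
      (by rw [mul_comm (n.choose q)] at hchain ⊢; rw [mul_comm (Z.card * t)] at hchain ⊢; exact hchain) hpos
  rw [div_le_iff₀ (by exact_mod_cast Nat.pos_of_ne_zero (by omega))]
  exact_mod_cast hfinal
end

section
/- For every integer m ≥ 3 and every real α with 0 ≤ α ≤ (m+1)/(2m+1), the inequality (m+1−2α)^{m−1}/(m−1)! > (α/2)·(m+1−α)^{m−2}/(m−2)! holds; in particular it holds strictly at the endpoint α = (m+1)/(2m+1). -/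
lemma key_ineq (k : ℕ) :
    ((k : ℝ) + 2) * (2 * (k : ℝ) + 7) ^ (k + 1) < 2 * (2 * (k : ℝ) + 5) ^ (k + 2) := by
  set x : ℝ := (k : ℝ) with hxdef
  have hx : 0 ≤ x := Nat.cast_nonneg k
  have h5 : (0 : ℝ) < 2 * x + 5 := by linarith
  have h7 : (2 * x + 7 : ℝ) = (2 * x + 5) * (1 + 2 / (2 * x + 5)) := by
    field_simp; ring
  have hb : (1 + 2 / (2 * x + 5)) ^ (k + 1) ≤ Real.exp 1 := by
    have h1 : (1 + 2 / (2 * x + 5)) ≤ Real.exp (2 / (2 * x + 5)) := by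
      have := Real.add_one_le_exp (2 / (2 * x + 5)); linarith
    calc (1 + 2 / (2 * x + 5)) ^ (k + 1)
        ≤ (Real.exp (2 / (2 * x + 5))) ^ (k + 1) := by
          apply pow_le_pow_left₀ (by positivity) h1
      _ = Real.exp ((k + 1 : ℕ) * (2 / (2 * x + 5))) := by
          rw [← Real.exp_nat_mul]
      _ ≤ Real.exp 1 := by
          apply Real.exp_le_exp.mpr
          rw [mul_comm, div_mul_eq_mul_div, div_le_one h5]
          push_cast
          linarith
  have hexp3 : Real.exp 1 < 3 := by
    have := Real.exp_one_lt_d9; linarith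
  have hP : (0 : ℝ) < (2 * x + 5) ^ (k + 1) := pow_pos h5 _
  calc (x + 2) * (2 * x + 7) ^ (k + 1)
      = (x + 2) * ((2 * x + 5) ^ (k + 1) * (1 + 2 / (2 * x + 5)) ^ (k + 1)) := by
        rw [h7, mul_pow]
    _ ≤ (x + 2) * ((2 * x + 5) ^ (k + 1) * Real.exp 1) := by
        apply mul_le_mul_of_nonneg_left _ (by linarith)
        exact mul_le_mul_of_nonneg_left hb (by positivity)
    _ < (x + 2) * ((2 * x + 5) ^ (k + 1) * 3) := by
        apply mul_lt_mul_of_pos_left _ (by linarith)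
        exact mul_lt_mul_of_pos_left hexp3 hP
    _ ≤ 2 * (2 * x + 5) ^ (k + 2) := by
        have hps : (2 * x + 5) ^ (k + 2) = (2 * x + 5) ^ (k + 1) * (2 * x + 5) := pow_succ _ _
        rw [hps]
        nlinarith [mul_nonneg hP.le hx]

theorem stmt_5 (m : ℕ) (hm : 3 ≤ m) (α : ℝ) (h0 : 0 ≤ α)
    (h1 : α ≤ ((m : ℝ) + 1) / (2 * m + 1)) :
    ((m : ℝ) + 1 - 2 * α) ^ (m - 1) / (m - 1).factorial >
      α / 2 * ((m : ℝ) + 1 - α) ^ (m - 2) / (m - 2).factorial := by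
  obtain ⟨k, rfl⟩ : ∃ k, m = k + 3 := ⟨m - 3, by omega⟩
  have e1 : k + 3 - 1 = k + 2 := by omega
  have e2 : k + 3 - 2 = k + 1 := by omega
  rw [e1, e2]
  set x : ℝ := (k : ℝ) with hxdef
  have hx : 0 ≤ x := Nat.cast_nonneg k
  have h7p : (0 : ℝ) < 2 * x + 7 := by linarith
  have h5p : (0 : ℝ) < 2 * x + 5 := by linarith
  have h4p : (0 : ℝ) < x + 4 := by linarith
  have hcast : ((k + 3 : ℕ) : ℝ) + 1 = x + 4 := by push_cast; ring
  have ha0 : α ≤ (x + 4) / (2 * x + 7) := by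
    have h2 : 2 * ((k + 3 : ℕ) : ℝ) + 1 = 2 * x + 7 := by push_cast; ring
    rw [hcast, h2] at h1
    exact h1
  rw [hcast]
  have hF2 : (0 : ℝ) < ((k + 1).factorial : ℝ) :=
    Nat.cast_pos.mpr (Nat.factorial_pos _)
  have hF1p : (0 : ℝ) < ((k + 2).factorial : ℝ) :=
    Nat.cast_pos.mpr (Nat.factorial_pos _)
  have hF1 : ((k + 2).factorial : ℝ) = (x + 2) * ((k + 1).factorial : ℝ) := by
    rw [show k + 2 = (k + 1) + 1 from rfl, Nat.factorial_succ]
    push_cast; ring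
  -- lower bound for LHS base
  have hsplit : (x + 4) * (2 * x + 5) / (2 * x + 7)
      = (x + 4) - 2 * ((x + 4) / (2 * x + 7)) := by
    field_simp; ring
  have hL0 : (x + 4) * (2 * x + 5) / (2 * x + 7) ≤ x + 4 - 2 * α := by
    rw [hsplit]; linarith
  have hL0p : (0 : ℝ) < (x + 4) * (2 * x + 5) / (2 * x + 7) := by positivity
  have hLpow : ((x + 4) * (2 * x + 5) / (2 * x + 7)) ^ (k + 2) ≤ (x + 4 - 2 * α) ^ (k + 2) :=
    pow_le_pow_left₀ hL0p.le hL0 _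
  -- upper bound for RHS
  have hαle : α ≤ x + 4 := by
    refine ha0.trans ?_
    rw [div_le_iff₀ h7p]; nlinarith
  have hRa : α * (x + 4 - α) ^ (k + 1) ≤ ((x + 4) / (2 * x + 7)) * (x + 4) ^ (k + 1) := by
    apply mul_le_mul ha0 (pow_le_pow_left₀ (by linarith) (by linarith) _)
      (pow_nonneg (by linarith) _) (by positivity)
  -- core inequality
  have K := key_ineq k
  rw [← hxdef] at K
  have hstep : (x + 4) ^ (k + 2) * ((x + 2) * (2 * x + 7) ^ (k + 1)) <
      (x + 4) ^ (k + 2) * (2 * (2 * x + 5) ^ (k + 2)) :=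
    mul_lt_mul_of_pos_left K (pow_pos h4p _)
  have hmain : (x + 4) ^ (k + 2) * (x + 2) / (2 * (2 * x + 7)) <
      ((x + 4) * (2 * x + 5) / (2 * x + 7)) ^ (k + 2) := by
    rw [div_pow, mul_pow, div_lt_div_iff₀ (by positivity) (pow_pos h7p _)]
    have e27 : (2 * x + 7) ^ (k + 2) = (2 * x + 7) ^ (k + 1) * (2 * x + 7) := pow_succ _ _
    rw [e27]
    nlinarith [mul_lt_mul_of_pos_right hstep h7p]
  have core : ((x + 4) / (2 * x + 7)) * (x + 4) ^ (k + 1) / 2 / ((k + 1).factorial : ℝ) <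
      ((x + 4) * (2 * x + 5) / (2 * x + 7)) ^ (k + 2) / ((k + 2).factorial : ℝ) := by
    rw [div_lt_div_iff₀ hF2 hF1p, hF1]
    calc ((x + 4) / (2 * x + 7)) * (x + 4) ^ (k + 1) / 2 * ((x + 2) * ((k + 1).factorial : ℝ))
        = ((x + 4) ^ (k + 2) * (x + 2) / (2 * (2 * x + 7))) * ((k + 1).factorial : ℝ) := by
          field_simp; ring
      _ < ((x + 4) * (2 * x + 5) / (2 * x + 7)) ^ (k + 2) * ((k + 1).factorial : ℝ) :=
          mul_lt_mul_of_pos_right hmain hF2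
  -- assemble
  calc α / 2 * (x + 4 - α) ^ (k + 1) / ((k + 1).factorial : ℝ)
      = α * (x + 4 - α) ^ (k + 1) / 2 / ((k + 1).factorial : ℝ) := by ring
    _ ≤ ((x + 4) / (2 * x + 7)) * (x + 4) ^ (k + 1) / 2 / ((k + 1).factorial : ℝ) := by
        apply (div_le_div_iff_of_pos_right hF2).mpr
        apply (div_le_div_iff_of_pos_right two_pos).mpr hRa
    _ < ((x + 4) * (2 * x + 5) / (2 * x + 7)) ^ (k + 2) / ((k + 2).factorial : ℝ) := core
    _ ≤ (x + 4 - 2 * α) ^ (k + 2) / ((k + 2).factorial : ℝ) :=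
        (div_le_div_iff_of_pos_right hF1p).mpr hLpow
end

section
/- Let s, ℓ be positive integers with 1 < ℓ ≤ t(s), where t(s) = (17 − 18s + √(49 − 852s + 1284s²))/20, and suppose s is large enough that the smaller root of 10x² + (18s−17)x − 24s² + 6s + 6 is negative. Then binom(ℓ−1, 2) + binom(4s−ℓ, 3) − binom(4s−2ℓ+1, 3) ≥ binom(3ℓ−1, 3), with equality if and only if ℓ = t(s). -/
set_option maxHeartbeats 1000000

lemma choose_two_mul (n : ℕ) : ((n.choose 2 : ℤ)) * 2 = (n : ℤ) * ((n : ℤ) - 1) := by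
  induction n with
  | zero => simp
  | succ n ih =>
    rw [Nat.choose_succ_succ]
    push_cast
    have : ((n.choose 1 : ℤ)) = (n : ℤ) := by simp
    linear_combination ih + 2 * this

lemma choose_three_mul (n : ℕ) :
    ((n.choose 3 : ℤ)) * 6 = (n : ℤ) * ((n : ℤ) - 1) * ((n : ℤ) - 2) := by
  induction n with
  | zero => simp
  | succ n ih =>
    rw [Nat.choose_succ_succ]
    push_cast
    linear_combination ih + 3 * choose_two_mul n

theorem stmt_10 (s ℓ : ℕ) (hs : 1 ≤ s) (hℓ1 : 1 < ℓ)
    (t : ℝ) (ht : t = (17 - 18 * (s : ℝ) + Real.sqrt (49 - 852 * (s : ℝ) + 1284 * (s : ℝ) ^ 2)) / 20)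
    (hℓt : (ℓ : ℝ) ≤ t)
    (hroot : (17 - 18 * (s : ℝ) - Real.sqrt (49 - 852 * (s : ℝ) + 1284 * (s : ℝ) ^ 2)) / 20 < 0)
    (h1 : 3 ≤ 4 * s - 2 * ℓ + 1) :
    (((3 * ℓ - 1).choose 3 : ℤ) ≤
        ((ℓ - 1).choose 2 : ℤ) + ((4 * s - ℓ).choose 3 : ℤ) - ((4 * s - 2 * ℓ + 1).choose 3 : ℤ)) ∧
      ((((ℓ - 1).choose 2 : ℤ) + ((4 * s - ℓ).choose 3 : ℤ) - ((4 * s - 2 * ℓ + 1).choose 3 : ℤ)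
          = ((3 * ℓ - 1).choose 3 : ℤ)) ↔ (ℓ : ℝ) = t) := by
  -- notation
  set a : ℝ := (s : ℝ) with ha
  set x : ℝ := (ℓ : ℝ) with hx
  have ha1 : (1 : ℝ) ≤ a := by rw [ha]; exact_mod_cast hs
  have hx1 : (1 : ℝ) < x := by rw [hx]; exact_mod_cast hℓ1
  have hD : (0 : ℝ) ≤ 49 - 852 * a + 1284 * a ^ 2 := by nlinarith
  set r : ℝ := Real.sqrt (49 - 852 * a + 1284 * a ^ 2) with hr
  have hsq : r ^ 2 = 49 - 852 * a + 1284 * a ^ 2 := Real.sq_sqrt hD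
  -- the quadratic, real version
  set QR : ℝ := 10 * x ^ 2 + (18 * a - 17) * x - 24 * a ^ 2 + 6 * a + 6 with hQR
  have hfac : QR = 10 * (x - t) * (x - (17 - 18 * a - r) / 20) := by
    rw [hQR, ht]; linear_combination ((1 : ℝ)/40) * hsq
  have ht' : (17 - 18 * a - r) / 20 < 0 := hroot
  have hxt' : 0 < x - (17 - 18 * a - r) / 20 := by linarith
  have hQRle : QR ≤ 0 := by
    rw [hfac]
    have : x - t ≤ 0 := by linarith
    nlinarith
  have hQRiff : QR = 0 ↔ x = t := by
    constructor
    · intro h0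
      rw [hfac] at h0
      rcases mul_eq_zero.1 h0 with h | h
      · rcases mul_eq_zero.1 h with h | h
        · norm_num at h
        · linarith
      · linarith
    · intro h0; rw [hfac, h0]; ring
  -- integer quadratic
  set QZ : ℤ := 10 * (ℓ : ℤ) ^ 2 + (18 * (s : ℤ) - 17) * (ℓ : ℤ) - 24 * (s : ℤ) ^ 2 + 6 * (s : ℤ) + 6
    with hQZ
  have hcast : ((QZ : ℤ) : ℝ) = QR := by rw [hQZ, hQR, ha, hx]; push_cast; ring
  have hQZle : QZ ≤ 0 := by
    have : ((QZ : ℤ) : ℝ) ≤ 0 := by rw [hcast]; exact hQRle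
    exact_mod_cast this
  have hQZiff : QZ = 0 ↔ x = t := by
    rw [← hQRiff, ← hcast]
    exact_mod_cast Iff.rfl
  -- cast equalities for the truncated subtractions
  have hc1 : ((ℓ - 1 : ℕ) : ℤ) = (ℓ : ℤ) - 1 := by omega
  have hc2 : ((4 * s - ℓ : ℕ) : ℤ) = 4 * (s : ℤ) - ℓ := by omega
  have hc3 : ((4 * s - 2 * ℓ + 1 : ℕ) : ℤ) = 4 * (s : ℤ) - 2 * ℓ + 1 := by omega
  have hc4 : ((3 * ℓ - 1 : ℕ) : ℤ) = 3 * (ℓ : ℤ) - 1 := by omega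
  -- the key identity
  have e1 := choose_two_mul (ℓ - 1)
  have e2 := choose_three_mul (4 * s - ℓ)
  have e3 := choose_three_mul (4 * s - 2 * ℓ + 1)
  have e4 := choose_three_mul (3 * ℓ - 1)
  rw [hc1] at e1; rw [hc2] at e2; rw [hc3] at e3; rw [hc4] at e4
  have key : 6 * (((ℓ - 1).choose 2 : ℤ) + ((4 * s - ℓ).choose 3 : ℤ)
      - ((4 * s - 2 * ℓ + 1).choose 3 : ℤ) - ((3 * ℓ - 1).choose 3 : ℤ))
      = -2 * ((ℓ : ℤ) - 1) * QZ := by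
    rw [hQZ]; linear_combination 3 * e1 + e2 - e3 - e4
  have hℓZ : (1 : ℤ) < (ℓ : ℤ) := by exact_mod_cast hℓ1
  constructor
  · nlinarith [mul_nonneg (by linarith : (0:ℤ) ≤ (ℓ : ℤ) - 1) (by linarith : (0:ℤ) ≤ -QZ)]
  · rw [← hQZiff]
    constructor
    · intro h
      have h6 : -2 * ((ℓ : ℤ) - 1) * QZ = 0 := by linarith [key]
      have hpos : (0 : ℤ) < (ℓ : ℤ) - 1 := by linarith
      by_contra hne
      have hlt : QZ < 0 := lt_of_le_of_ne hQZle hne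
      nlinarith [mul_pos hpos (neg_pos.2 hlt)]
    · intro h
      have : 6 * (((ℓ - 1).choose 2 : ℤ) + ((4 * s - ℓ).choose 3 : ℤ)
          - ((4 * s - 2 * ℓ + 1).choose 3 : ℤ) - ((3 * ℓ - 1).choose 3 : ℤ)) = 0 := by
        rw [key, h]; ring
      linarith
end

section
/- Let n ≥ 3s be integers with s ≥ 1, and let G ⊆ binom([n], 2) satisfy ν(G) < s (G contains no s pairwise disjoint edges). Then |G| ≤ binom(n,2) − binom(n−s+1, 2) = (s−1)(2n−s)/2. -/
open Finset

variable {α : Type*} [DecidableEq α]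

/-- Recover an edge from two of its distinct elements. -/
lemma edge_eq {e : Finset α} (h2 : e.card = 2) {a x : α} (ha : a ∈ e) (hx : x ∈ e)
    (hne : x ≠ a) : e = {a, x} := by
  obtain ⟨u, v, huv, rfl⟩ := Finset.card_eq_two.1 h2
  simp only [mem_insert, mem_singleton] at ha hx
  rcases ha with rfl | rfl <;> rcases hx with rfl | rfl <;> first
    | exact absurd rfl hne
    | exact Finset.pair_comm _ _
    | rfl

/-- vertex set of a matching has card 2*m -/
lemma vm_card {M : Finset (Finset α)} (hd : (M : Set (Finset α)).PairwiseDisjoint id)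
    (h2 : ∀ e ∈ M, e.card = 2) : (M.biUnion id).card = 2 * M.card := by
  rw [Finset.card_biUnion (fun x hx y hy hxy => hd (mem_coe.2 hx) (mem_coe.2 hy) hxy)]
  simp only [id_eq]
  rw [Finset.sum_congr rfl h2]
  simp [mul_comm]

def deg (G : Finset (Finset α)) (a : α) : ℕ := (G.filter (fun e => a ∈ e)).card

def nbr (G : Finset (Finset α)) (a : α) : Finset α :=
  (G.filter (fun e => a ∈ e)).biUnion (fun e => e.erase a)

lemma mem_nbr {G : Finset (Finset α)} {a x : α} :
    x ∈ nbr G a ↔ ∃ e ∈ G, a ∈ e ∧ x ∈ e ∧ x ≠ a := by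
  simp only [nbr, mem_biUnion, mem_filter, mem_erase]
  tauto

lemma nbr_pair {G : Finset (Finset α)} (hG2 : ∀ e ∈ G, e.card = 2) {a x : α}
    (h : x ∈ nbr G a) : ({a, x} : Finset α) ∈ G ∧ x ≠ a := by
  obtain ⟨e, he, hae, hxe, hxa⟩ := mem_nbr.1 h
  exact ⟨(edge_eq (hG2 e he) hae hxe hxa) ▸ he, hxa⟩

lemma pair_mem_nbr {G : Finset (Finset α)} {a x : α} (h : ({a, x} : Finset α) ∈ G)
    (hxa : x ≠ a) : x ∈ nbr G a :=
  mem_nbr.2 ⟨{a, x}, h, by simp, by simp, hxa⟩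

lemma nbr_symm {G : Finset (Finset α)} {a x : α} (h : x ∈ nbr G a) : a ∈ nbr G x := by
  obtain ⟨e, he, hae, hxe, hxa⟩ := mem_nbr.1 h
  exact mem_nbr.2 ⟨e, he, hxe, hae, Ne.symm hxa⟩

lemma deg_eq_card_nbr {G : Finset (Finset α)} (hG2 : ∀ e ∈ G, e.card = 2) (a : α) :
    deg G a = (nbr G a).card := by
  rw [nbr, Finset.card_biUnion, deg]
  · have h1 : ∀ e ∈ G.filter (fun e => a ∈ e), (e.erase a).card = 1 := by
      intro e he
      rw [mem_filter] at he
      rw [Finset.card_erase_of_mem he.2, hG2 e he.1]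
    rw [Finset.sum_congr rfl h1]
    simp

  · intro e he f hf hef
    rw [mem_coe, mem_filter] at he hf
    simp only [Finset.disjoint_left, mem_erase]
    rintro x ⟨hxa, hxe⟩ ⟨-, hxf⟩
    exact hef ((edge_eq (hG2 e he.1) he.2 hxe hxa).trans
      (edge_eq (hG2 f hf.1) hf.2 hxf hxa).symm)

/-- helper: picking two distinct elements from two finsets of size ≥ (1,2) resp. -/
lemma two_picks {A B : Finset α} (hA : A.Nonempty) (hB : 2 ≤ B.card) :
    ∃ f ∈ A, ∃ g ∈ B, f ≠ g := by
  obtain ⟨f, hf⟩ := hA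
  obtain ⟨g, hg⟩ : (B \ {f}).Nonempty := by
    rw [← Finset.card_pos]
    have h2 := Finset.card_le_card_sdiff_add_card (s := B) (t := {f})
    simp only [Finset.card_singleton] at h2
    omega
  rw [mem_sdiff, mem_singleton] at hg
  exact ⟨f, hf, g, hg.1, fun h => hg.2 h.symm⟩

lemma pair_disjoint {x y : α} {e : Finset α} (hx : x ∉ e) (hy : y ∉ e) :
    Disjoint ({x, y} : Finset α) e := by
  rw [Finset.disjoint_left]
  intro z hz
  simp only [mem_insert, mem_singleton] at hz
  rcases hz with rfl | rfl <;> assumption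

lemma pd_insert {M : Finset (Finset α)} (hMd : (M : Set (Finset α)).PairwiseDisjoint id)
    {e : Finset α} (h : ∀ e' ∈ M, Disjoint e e') :
    ((insert e M : Finset (Finset α)) : Set (Finset α)).PairwiseDisjoint id := by
  rw [Finset.coe_insert]
  exact hMd.insert (fun e' he' _ => h e' (Finset.mem_coe.1 he'))

lemma pd_erase {M : Finset (Finset α)} (hMd : (M : Set (Finset α)).PairwiseDisjoint id)
    (e : Finset α) : ((M.erase e : Finset (Finset α)) : Set (Finset α)).PairwiseDisjoint id :=
  hMd.subset (Finset.coe_subset.2 (Finset.erase_subset _ _))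

lemma mem_of_eq_pair {e : Finset α} {a b : α} (h : e = ({a, b} : Finset α)) :
    a ∈ e ∧ b ∈ e := by
  rw [h]; simp

lemma keyD (V : Finset α) (G : Finset (Finset α)) (s : ℕ)
    (hG : ∀ e ∈ G, e.card = 2 ∧ e ⊆ V) (hn : 3 * s ≤ V.card)
    (M : Finset (Finset α)) (hMG : M ⊆ G)
    (hMd : (M : Set (Finset α)).PairwiseDisjoint id)
    (hmax : ∀ M' ⊆ G, (M' : Set (Finset α)).PairwiseDisjoint id → M'.card ≤ M.card)
    (hm : M.card + 1 ≤ s) (hne : G.Nonempty) :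
    ∃ a b, ({a, b} : Finset α) ∈ G ∧ deg G a + deg G b + 2 ≤ V.card + s := by
  by_contra hcon
  push_neg at hcon
  set n := V.card with hndef
  have hG2 : ∀ e ∈ G, e.card = 2 := fun e he => (hG e he).1
  set VM := M.biUnion id with hVMdef
  have hVM : VM.card = 2 * M.card := vm_card hMd (fun e he => hG2 e (hMG he))
  have hVMsub : VM ⊆ V := by
    intro x hx
    obtain ⟨e, he, hxe⟩ := mem_biUnion.1 hx
    exact (hG e (hMG he)).2 hxe
  set F := V \ VM with hFdef
  have hMdisj : ∀ e ∈ M, ∀ e' ∈ M, e ≠ e' → Disjoint e e' :=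
    fun e he e' he' hne' => hMd (mem_coe.2 he) (mem_coe.2 he') hne'
  have hmemVM : ∀ e ∈ M, ∀ x ∈ e, x ∈ VM := fun e he x hx => mem_biUnion.2 ⟨e, he, hx⟩
  -- every edge meets VM
  have hmeet : ∀ e ∈ G, ∃ v ∈ e, v ∈ VM := by
    intro e he
    by_contra h
    push_neg at h
    have heM : e ∉ M := by
      intro hem
      obtain ⟨u, v, -, rfl⟩ := Finset.card_eq_two.1 (hG2 e he)
      exact h u (by simp) (hmemVM _ hem u (by simp))
    have hd : ∀ e' ∈ M, Disjoint e e' := by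
      intro e' he'
      rw [Finset.disjoint_left]
      intro x hx hx'
      exact h x hx (hmemVM e' he' x hx')
    have hle := hmax _ (Finset.insert_subset he hMG) (pd_insert hMd hd)
    rw [Finset.card_insert_of_notMem heM] at hle
    omega
  have hm1 : 1 ≤ M.card := by
    obtain ⟨e, he⟩ := hne
    obtain ⟨v, -, hvVM⟩ := hmeet e he
    obtain ⟨e', he', -⟩ := mem_biUnion.1 hvVM
    exact Finset.card_pos.2 ⟨e', he'⟩
  have hdeg : ∀ a b, ({a, b} : Finset α) ∈ G → n + s ≤ deg G a + deg G b + 1 := by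
    intro a b h
    have := hcon a b h
    omega
  have hnbrV : ∀ a, nbr G a ⊆ V.erase a := by
    intro a x hx
    obtain ⟨e, he, hae, hxe, hxa⟩ := mem_nbr.1 hx
    exact Finset.mem_erase.2 ⟨hxa, (hG e he).2 hxe⟩
  have hdeg_le : ∀ a ∈ V, deg G a + 1 ≤ n := by
    intro a ha
    have h1 := Finset.card_le_card (hnbrV a)
    rw [Finset.card_erase_of_mem ha] at h1
    rw [deg_eq_card_nbr hG2]
    have : 1 ≤ n := by omega
    omega
  have hsplit : ∀ a ∈ VM, deg G a ≤ (nbr G a ∩ F).card + (2 * M.card - 1) := by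
    intro a ha
    have hsub : nbr G a ⊆ (nbr G a ∩ F) ∪ (VM.erase a) := by
      intro x hx
      by_cases hxVM : x ∈ VM
      · exact Finset.mem_union_right _ (Finset.mem_erase.2
          ⟨(Finset.mem_erase.1 (hnbrV a hx)).1, hxVM⟩)
      · exact Finset.mem_union_left _ (Finset.mem_inter.2
          ⟨hx, Finset.mem_sdiff.2 ⟨(Finset.mem_erase.1 (hnbrV a hx)).2, hxVM⟩⟩)
    have h1 := Finset.card_le_card hsub
    have h2 := Finset.card_union_le (nbr G a ∩ F) (VM.erase a)
    rw [Finset.card_erase_of_mem ha, hVM] at h2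
    rw [deg_eq_card_nbr hG2]
    omega
  -- augmentation 1
  have haug1 : ∀ a0 b0, ({a0, b0} : Finset α) ∈ M → a0 ≠ b0 →
      ∀ f g, f ∈ nbr G a0 ∩ F → g ∈ nbr G b0 ∩ F → f ≠ g → False := by
    intro a0 b0 he hab f g hf hg hfg
    rw [Finset.mem_inter] at hf hg
    have hfVM : f ∉ VM := (Finset.mem_sdiff.1 hf.2).2
    have hgVM : g ∉ VM := (Finset.mem_sdiff.1 hg.2).2
    have ha0VM : a0 ∈ VM := hmemVM _ he a0 (by simp)
    have hb0VM : b0 ∈ VM := hmemVM _ he b0 (by simp)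
    have hfa : ({f, a0} : Finset α) ∈ G := by
      have := (nbr_pair hG2 hf.1).1
      rwa [Finset.pair_comm] at this
    have hgb : ({g, b0} : Finset α) ∈ G := by
      have := (nbr_pair hG2 hg.1).1
      rwa [Finset.pair_comm] at this
    set M' := insert ({f, a0} : Finset α) (insert ({g, b0} : Finset α) (M.erase {a0, b0}))
      with hM'def
    have hdis1 : ∀ e' ∈ M.erase {a0, b0}, Disjoint ({g, b0} : Finset α) e' := by
      intro e' he'
      rw [Finset.mem_erase] at he'
      refine pair_disjoint (fun hge' => hgVM (hmemVM _ he'.2 g hge')) (fun hbe' => ?_)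
      have hd := hMdisj _ he _ he'.2 (Ne.symm he'.1)
      exact (Finset.disjoint_left.1 hd (by simp)) hbe'
    have hdis2 : ∀ e' ∈ insert ({g, b0} : Finset α) (M.erase {a0, b0}),
        Disjoint ({f, a0} : Finset α) e' := by
      intro e' he'
      rcases Finset.mem_insert.1 he' with rfl | he'
      · refine pair_disjoint ?_ ?_
        · simp only [mem_insert, mem_singleton]
          push_neg
          exact ⟨hfg, fun h => hfVM (h ▸ hb0VM)⟩
        · simp only [mem_insert, mem_singleton]
          push_neg
          exact ⟨fun h => hgVM (h ▸ ha0VM), hab⟩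
      · rw [Finset.mem_erase] at he'
        refine pair_disjoint (fun hh => hfVM (hmemVM _ he'.2 f hh)) (fun hh => ?_)
        have hd := hMdisj _ he _ he'.2 (Ne.symm he'.1)
        exact (Finset.disjoint_left.1 hd (by simp)) hh
    have hM'G : M' ⊆ G := by
      intro x hx
      rcases Finset.mem_insert.1 hx with rfl | hx
      · exact hfa
      · rcases Finset.mem_insert.1 hx with rfl | hx
        · exact hgb
        · exact hMG (Finset.erase_subset _ _ hx)
    have hM'd : (M' : Set (Finset α)).PairwiseDisjoint id :=
      pd_insert (pd_insert (pd_erase hMd _) hdis1) hdis2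
    have hnm1 : ({g, b0} : Finset α) ∉ M.erase {a0, b0} := by
      intro h
      exact hgVM (hmemVM _ (Finset.erase_subset _ _ h) g (by simp))
    have hnm2 : ({f, a0} : Finset α) ∉ insert ({g, b0} : Finset α) (M.erase {a0, b0}) := by
      intro h
      rcases Finset.mem_insert.1 h with h | h
      · have hfin : f ∈ ({g, b0} : Finset α) := h ▸ (by simp)
        simp only [mem_insert, mem_singleton] at hfin
        rcases hfin with rfl | rfl
        · exact hfg rfl
        · exact hfVM hb0VM
      · exact hfVM (hmemVM _ (Finset.erase_subset _ _ h) f (by simp))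
    have hle := hmax M' hM'G hM'd
    rw [hM'def, Finset.card_insert_of_notMem hnm2, Finset.card_insert_of_notMem hnm1,
      Finset.card_erase_of_mem he] at hle
    omega
  -- step 3 : orientation of each matching edge
  have step3 : ∀ e ∈ M, ∃ a b, e = ({a, b} : Finset α) ∧ a ≠ b ∧ (nbr G b ∩ F) = ∅ ∧
      2 ≤ (nbr G a ∩ F).card := by
    intro e he
    obtain ⟨a0, b0, hab, rfl⟩ := Finset.card_eq_two.1 (hG2 e (hMG he))
    have hEG : ({a0, b0} : Finset α) ∈ G := hMG he
    have ha0 : a0 ∈ VM := hmemVM _ he a0 (by simp)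
    have hb0 : b0 ∈ VM := hmemVM _ he b0 (by simp)
    have hsum := hdeg _ _ hEG
    have hsa := hsplit a0 ha0
    have hsb := hsplit b0 hb0
    by_cases hA : (nbr G a0 ∩ F).Nonempty
    · by_cases hB : (nbr G b0 ∩ F).Nonempty
      · exfalso
        have hAc : 1 ≤ (nbr G a0 ∩ F).card := Finset.card_pos.2 hA
        have hBc : 1 ≤ (nbr G b0 ∩ F).card := Finset.card_pos.2 hB
        rcases le_or_gt 2 ((nbr G b0 ∩ F).card) with h2 | h2
        · obtain ⟨f, hf, g, hg, hfg⟩ := two_picks hA h2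
          exact haug1 a0 b0 he hab f g hf hg hfg
        · have h2' : 2 ≤ (nbr G a0 ∩ F).card := by omega
          obtain ⟨g, hg, f, hf, hgf⟩ := two_picks hB h2'
          exact haug1 a0 b0 he hab f g hf hg (Ne.symm hgf)
      · rw [Finset.not_nonempty_iff_eq_empty] at hB
        refine ⟨a0, b0, rfl, hab, hB, ?_⟩
        rw [hB] at hsb
        simp only [Finset.card_empty] at hsb
        omega
    · rw [Finset.not_nonempty_iff_eq_empty] at hA
      refine ⟨b0, a0, Finset.pair_comm a0 b0, hab.symm, hA, ?_⟩
      rw [hA] at hsa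
      simp only [Finset.card_empty] at hsa
      omega
  choose fA fB hfab hfne hBF hA2 using step3
  -- augmentation 2 : no edges between the B-side vertices
  have haug2 : ∀ e, (he : e ∈ M) → ∀ e', (he' : e' ∈ M) → e ≠ e' →
      ({fB e he, fB e' he'} : Finset α) ∈ G → False := by
    intro e he e' he' hee' hBB
    have hfAe : fA e he ∈ e := (mem_of_eq_pair (hfab e he)).1
    have hfBe : fB e he ∈ e := (mem_of_eq_pair (hfab e he)).2
    have hfAe' : fA e' he' ∈ e' := (mem_of_eq_pair (hfab e' he')).1
    have hfBe' : fB e' he' ∈ e' := (mem_of_eq_pair (hfab e' he')).2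
    have hdee' := hMdisj _ he _ he' hee'
    obtain ⟨f, hf, g, hg, hfg⟩ := two_picks (Finset.card_pos.1 (lt_of_lt_of_le two_pos (hA2 e he)))
      (hA2 e' he')
    rw [Finset.mem_inter] at hf hg
    have hfVM : f ∉ VM := (Finset.mem_sdiff.1 hf.2).2
    have hgVM : g ∉ VM := (Finset.mem_sdiff.1 hg.2).2
    have hfa : ({f, fA e he} : Finset α) ∈ G := by
      have := (nbr_pair hG2 hf.1).1
      rwa [Finset.pair_comm] at this
    have hga : ({g, fA e' he'} : Finset α) ∈ G := by
      have := (nbr_pair hG2 hg.1).1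
      rwa [Finset.pair_comm] at this
    set M0 := (M.erase e).erase e' with hM0def
    have hM0sub : M0 ⊆ M := (Finset.erase_subset _ _).trans (Finset.erase_subset _ _)
    have hM0mem : ∀ x ∈ M0, x ≠ e ∧ x ≠ e' ∧ x ∈ M := by
      intro x hx
      rw [hM0def, Finset.mem_erase, Finset.mem_erase] at hx
      exact ⟨hx.2.1, hx.1, hx.2.2⟩
    have hnotin : ∀ x ∈ M0, ∀ v ∈ e, v ∉ x := by
      intro x hx v hv hvx
      obtain ⟨hxe, -, hxM⟩ := hM0mem x hx
      exact (Finset.disjoint_left.1 (hMdisj _ hxM _ he hxe) hvx) hv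
    have hnotin' : ∀ x ∈ M0, ∀ v ∈ e', v ∉ x := by
      intro x hx v hv hvx
      obtain ⟨-, hxe', hxM⟩ := hM0mem x hx
      exact (Finset.disjoint_left.1 (hMdisj _ hxM _ he' hxe') hvx) hv
    set X1 := ({fB e he, fB e' he'} : Finset α)
    set X2 := ({g, fA e' he'} : Finset α)
    set X3 := ({f, fA e he} : Finset α)
    set M' := insert X3 (insert X2 (insert X1 M0)) with hM'def
    have hd1 : ∀ x ∈ M0, Disjoint X1 x := fun x hx =>
      pair_disjoint (hnotin x hx _ hfBe) (hnotin' x hx _ hfBe')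
    have hd2 : ∀ x ∈ insert X1 M0, Disjoint X2 x := by
      intro x hx
      rcases Finset.mem_insert.1 hx with rfl | hx
      · refine pair_disjoint ?_ ?_
        · simp only [X1, mem_insert, mem_singleton]
          push_neg
          exact ⟨fun h => hgVM (h ▸ hmemVM _ he _ hfBe),
                 fun h => hgVM (h ▸ hmemVM _ he' _ hfBe')⟩
        · simp only [X1, mem_insert, mem_singleton]
          push_neg
          constructor
          · intro h
            rw [h] at hfAe'
            exact (Finset.disjoint_left.1 hdee' hfBe) hfAe'
          · intro h
            exact hfne e' he' h
      · exact pair_disjoint (fun h => hgVM (hmemVM _ (hM0mem x hx).2.2 g h))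
          (hnotin' x hx _ hfAe')
    have hd3 : ∀ x ∈ insert X2 (insert X1 M0), Disjoint X3 x := by
      intro x hx
      rcases Finset.mem_insert.1 hx with rfl | hx
      · refine pair_disjoint ?_ ?_
        · simp only [X2, mem_insert, mem_singleton]
          push_neg
          exact ⟨hfg, fun h => hfVM (h ▸ hmemVM _ he' _ hfAe')⟩
        · simp only [X2, mem_insert, mem_singleton]
          push_neg
          constructor
          · intro h
            exact hgVM (h ▸ hmemVM _ he _ hfAe)
          · intro h
            rw [h] at hfAe
            exact (Finset.disjoint_left.1 hdee' hfAe) hfAe'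
      · rcases Finset.mem_insert.1 hx with rfl | hx
        · refine pair_disjoint ?_ ?_
          · simp only [X1, mem_insert, mem_singleton]
            push_neg
            exact ⟨fun h => hfVM (h ▸ hmemVM _ he _ hfBe),
                   fun h => hfVM (h ▸ hmemVM _ he' _ hfBe')⟩
          · simp only [X1, mem_insert, mem_singleton]
            push_neg
            constructor
            · intro h
              exact hfne e he h
            · intro h
              rw [h] at hfAe
              exact (Finset.disjoint_left.1 hdee' hfAe) hfBe'
        · exact pair_disjoint (fun h => hfVM (hmemVM _ (hM0mem x hx).2.2 f h))
            (hnotin x hx _ hfAe)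
    have hM'G : M' ⊆ G := by
      intro x hx
      rcases Finset.mem_insert.1 hx with rfl | hx
      · exact hfa
      · rcases Finset.mem_insert.1 hx with rfl | hx
        · exact hga
        · rcases Finset.mem_insert.1 hx with rfl | hx
          · exact hBB
          · exact hMG (hM0sub hx)
    have hM'd : (M' : Set (Finset α)).PairwiseDisjoint id :=
      pd_insert (pd_insert (pd_insert (pd_erase (pd_erase hMd _) _) hd1) hd2) hd3
    have hnm1 : X1 ∉ M0 := by
      intro h
      exact hnotin _ h _ hfBe (by simp [X1])
    have hnm2 : X2 ∉ insert X1 M0 := by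
      intro h
      rcases Finset.mem_insert.1 h with h | h
      · have hgin : g ∈ X1 := h ▸ (by simp [X2])
        simp only [X1, mem_insert, mem_singleton] at hgin
        rcases hgin with rfl | rfl
        · exact hgVM (hmemVM _ he _ hfBe)
        · exact hgVM (hmemVM _ he' _ hfBe')
      · exact hgVM (hmemVM _ (hM0mem _ h).2.2 g (by simp [X2]))
    have hnm3 : X3 ∉ insert X2 (insert X1 M0) := by
      intro h
      rcases Finset.mem_insert.1 h with h | h
      · have hfin : f ∈ X2 := h ▸ (by simp [X3])
        simp only [X2, mem_insert, mem_singleton] at hfin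
        rcases hfin with rfl | rfl
        · exact hfg rfl
        · exact hfVM (hmemVM _ he' _ hfAe')
      · rcases Finset.mem_insert.1 h with h | h
        · have hfin : f ∈ X1 := h ▸ (by simp [X3])
          simp only [X1, mem_insert, mem_singleton] at hfin
          rcases hfin with rfl | rfl
          · exact hfVM (hmemVM _ he _ hfBe)
          · exact hfVM (hmemVM _ he' _ hfBe')
        · exact hfVM (hmemVM _ (hM0mem _ h).2.2 f (by simp [X3]))
    have hcard2 : 2 ≤ M.card := by
      have : ({e, e'} : Finset (Finset α)) ⊆ M := by
        intro x hx
        rcases Finset.mem_insert.1 hx with rfl | hx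
        · exact he
        · exact Finset.mem_singleton.1 hx ▸ he'
      have h2 := Finset.card_le_card this
      rwa [Finset.card_insert_of_notMem (by simpa using hee'), Finset.card_singleton] at h2
    have hle := hmax M' hM'G hM'd
    rw [hM'def, Finset.card_insert_of_notMem hnm3, Finset.card_insert_of_notMem hnm2,
      Finset.card_insert_of_notMem hnm1, hM0def, Finset.card_erase_of_mem
      (Finset.mem_erase.2 ⟨Ne.symm hee', he'⟩), Finset.card_erase_of_mem he] at hle
    omega
  -- final contradiction
  obtain ⟨e0, he0⟩ := Finset.card_pos.1 hm1
  obtain ⟨f, hf⟩ := Finset.card_pos.1 (show 0 < (nbr G (fA e0 he0) ∩ F).card by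
    have := hA2 e0 he0; omega)
  have hfF : f ∈ F := (Finset.mem_inter.1 hf).2
  have hfVM : f ∉ VM := (Finset.mem_sdiff.1 hfF).2
  have hEdge : ({fA e0 he0, f} : Finset α) ∈ G := (nbr_pair hG2 (Finset.mem_inter.1 hf).1).1
  have hdegsum := hdeg _ _ hEdge
  have hfAe0V : fA e0 he0 ∈ V :=
    (hG e0 (hMG he0)).2 (mem_of_eq_pair (hfab e0 he0)).1
  have hdfa := hdeg_le _ hfAe0V
  have hdf : deg G f ≤ M.card := by
    rw [deg_eq_card_nbr hG2]
    have hsub : nbr G f ⊆ M.attach.image (fun e => fA e.1 e.2) := by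
      intro x hx
      have hfx := nbr_pair hG2 hx
      obtain ⟨v, hv, hvVM⟩ := hmeet _ hfx.1
      have hxVM : x ∈ VM := by
        simp only [mem_insert, mem_singleton] at hv
        rcases hv with rfl | rfl
        · exact absurd hvVM hfVM
        · exact hvVM
      obtain ⟨e', he', hxe'⟩ := mem_biUnion.1 hxVM
      have hxor : x = fA e' he' ∨ x = fB e' he' := by
        have h := hfab e' he'
        rw [h] at hxe'
        simpa using hxe'
      rcases hxor with h | h
      · exact Finset.mem_image.2 ⟨⟨e', he'⟩, Finset.mem_attach _ _, h.symm⟩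
      · exfalso
        have hfn : f ∈ nbr G x := nbr_symm hx
        rw [h] at hfn
        have : f ∈ nbr G (fB e' he') ∩ F := Finset.mem_inter.2 ⟨hfn, hfF⟩
        rw [hBF e' he'] at this
        exact absurd this (Finset.notMem_empty f)
    calc (nbr G f).card ≤ _ := Finset.card_le_card hsub
      _ ≤ M.attach.card := Finset.card_image_le
      _ = M.card := Finset.card_attach
  omega

lemma EG : ∀ (s : ℕ) (V : Finset α) (G : Finset (Finset α)), 3 * s ≤ V.card →
    (∀ e ∈ G, e.card = 2 ∧ e ⊆ V) →
    (¬ ∃ M : Finset (Finset α), M ⊆ G ∧ M.card = s ∧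
      (M : Set (Finset α)).PairwiseDisjoint id) →
    2 * G.card + s * s + 2 * V.card ≤ 2 * s * V.card + s := by
  intro s
  induction s with
  | zero =>
    intro V G _ _ hν
    exact absurd ⟨∅, Finset.empty_subset _, Finset.card_empty, by simp⟩ hν
  | succ s ih =>
    intro V G hn hG hν
    classical
    rcases Finset.eq_empty_or_nonempty G with rfl | hne
    · simp only [Finset.card_empty, mul_zero, Nat.add_zero]
      nlinarith [hn]
    · have hne0 : (G.powerset.filter
          (fun (M : Finset (Finset α)) => (M : Set (Finset α)).PairwiseDisjoint id)).Nonempty := by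
        refine ⟨∅, Finset.mem_filter.2 ⟨Finset.mem_powerset.2 (Finset.empty_subset _), ?_⟩⟩
        simp
      obtain ⟨M, hMmem, hMmax⟩ := Finset.exists_max_image _ Finset.card hne0
      rw [Finset.mem_filter, Finset.mem_powerset] at hMmem
      obtain ⟨hMG, hMd⟩ := hMmem
      have hmax : ∀ M' ⊆ G, (M' : Set (Finset α)).PairwiseDisjoint id →
          M'.card ≤ M.card := by
        intro M' h1 h2
        exact hMmax M' (Finset.mem_filter.2 ⟨Finset.mem_powerset.2 h1, h2⟩)
      have hm : M.card + 1 ≤ s + 1 := by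
        by_contra h
        push_neg at h
        obtain ⟨M₀, hsub, hcard⟩ := Finset.exists_subset_card_eq (s := M) (n := s + 1) (by omega)
        exact hν ⟨M₀, hsub.trans hMG, hcard, hMd.subset (Finset.coe_subset.2 hsub)⟩
      obtain ⟨a, b, hab, hdab⟩ := keyD V G (s + 1) hG hn M hMG hMd hmax hm hne
      have habne : a ≠ b := by
        have h2 := (hG _ hab).1
        intro h
        subst h
        simp at h2
      have haV : a ∈ V := (hG _ hab).2 (by simp)
      have hbV : b ∈ V := (hG _ hab).2 (by simp)
      set G' := G.filter (fun e => a ∉ e ∧ b ∉ e) with hG'def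
      set V' := V \ {a, b} with hV'def
      have hV'card : V'.card = V.card - 2 := by
        rw [hV'def, Finset.card_sdiff_of_subset (by
          intro x hx
          simp only [mem_insert, mem_singleton] at hx
          rcases hx with rfl | rfl <;> assumption)]
        rw [Finset.card_insert_of_notMem (by simpa using habne), Finset.card_singleton]
      have hG'cond : ∀ e ∈ G', e.card = 2 ∧ e ⊆ V' := by
        intro e he
        rw [hG'def, Finset.mem_filter] at he
        refine ⟨(hG e he.1).1, ?_⟩
        intro x hx
        rw [hV'def, Finset.mem_sdiff]
        refine ⟨(hG e he.1).2 hx, ?_⟩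
        simp only [mem_insert, mem_singleton]
        rintro (rfl | rfl)
        exacts [he.2.1 hx, he.2.2 hx]
      have hν' : ¬ ∃ M₀ : Finset (Finset α), M₀ ⊆ G' ∧ M₀.card = s ∧
          (M₀ : Set (Finset α)).PairwiseDisjoint id := by
        rintro ⟨M₀, h1, h2, h3⟩
        have habM : ({a, b} : Finset α) ∉ M₀ := by
          intro h
          have h4 := h1 h
          rw [hG'def, Finset.mem_filter] at h4
          exact h4.2.1 (by simp)
        refine hν ⟨insert ({a, b} : Finset α) M₀, ?_, ?_, ?_⟩
        · exact Finset.insert_subset hab (h1.trans (Finset.filter_subset _ _))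
        · rw [Finset.card_insert_of_notMem habM, h2]
        · apply pd_insert h3
          intro e' he'
          have h4 := h1 he'
          rw [hG'def, Finset.mem_filter] at h4
          exact pair_disjoint h4.2.1 h4.2.2
      have hIH := ih V' G' (by omega) hG'cond hν'
      -- edge counting
      have hsplitG : (G.filter (fun e => a ∈ e ∨ b ∈ e)).card + G'.card = G.card := by
        rw [hG'def]
        have heq : G.filter (fun e => a ∉ e ∧ b ∉ e) =
            G.filter (fun e => ¬(a ∈ e ∨ b ∈ e)) := by
          apply Finset.filter_congr
          intro e _
          simp [not_or]
        rw [heq, Finset.card_filter_add_card_filter_not]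
      have hunion : G.filter (fun e => a ∈ e ∨ b ∈ e) =
          G.filter (fun e => a ∈ e) ∪ G.filter (fun e => b ∈ e) := Finset.filter_or _ _ _
      have hint : ({a, b} : Finset α) ∈
          G.filter (fun e => a ∈ e) ∩ G.filter (fun e => b ∈ e) := by
        simp [Finset.mem_inter, Finset.mem_filter, hab]
      have hcui := Finset.card_union_add_card_inter
        (G.filter (fun e => a ∈ e)) (G.filter (fun e => b ∈ e))
      have h1le : 1 ≤ (G.filter (fun e => a ∈ e) ∩ G.filter (fun e => b ∈ e)).card :=
        Finset.card_pos.2 ⟨_, hint⟩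
      have hda : deg G a = (G.filter (fun e => a ∈ e)).card := rfl
      have hdb : deg G b = (G.filter (fun e => b ∈ e)).card := rfl
      have hcount : G.card + 1 ≤ G'.card + deg G a + deg G b := by
        rw [hda, hdb]
        rw [hunion] at hsplitG
        omega
      obtain ⟨k, hk⟩ : ∃ k, V.card = k + 2 := ⟨V.card - 2, by omega⟩
      rw [show V'.card = k from by omega] at hIH
      rw [hk] at hdab ⊢
      nlinarith [hIH, hcount, hdab]

lemma two_mul_choose_two (k : ℕ) : 2 * k.choose 2 = k * (k - 1) := by
  rcases k with _ | k'
  · simp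
  · rw [Nat.choose_two_right, Nat.mul_div_cancel']
    rcases Nat.even_mul_succ_self k' with ⟨c, hc⟩
    refine ⟨c, ?_⟩
    simp only [Nat.add_sub_cancel]
    rw [Nat.mul_comm]
    omega

theorem stmt_15 (n s : ℕ) (hs : 1 ≤ s) (hn : 3 * s ≤ n)
    (G : Finset (Finset (Fin n))) (hG : ∀ e ∈ G, e.card = 2)
    (hν : ¬ ∃ M : Finset (Finset (Fin n)), M ⊆ G ∧ M.card = s ∧
      (M : Set (Finset (Fin n))).PairwiseDisjoint id) :
    G.card ≤ n.choose 2 - (n - s + 1).choose 2 ∧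
      2 * (n.choose 2 - (n - s + 1).choose 2) = (s - 1) * (2 * n - s) := by
  have hEG := EG s (Finset.univ : Finset (Fin n)) G
    (by rw [Finset.card_univ, Fintype.card_fin]; exact hn)
    (fun e he => ⟨hG e he, Finset.subset_univ e⟩) hν
  rw [Finset.card_univ, Fintype.card_fin] at hEG
  have h2x := two_mul_choose_two n
  have h2y := two_mul_choose_two (n - s + 1)
  have hyx : (n - s + 1).choose 2 ≤ n.choose 2 :=
    Nat.choose_le_choose 2 (by omega)
  obtain ⟨a, ha⟩ : ∃ a, n = s + a := ⟨n - s, by omega⟩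
  obtain ⟨b, hb⟩ : ∃ b, s = b + 1 := ⟨s - 1, by omega⟩
  subst hb
  subst ha
  have e1 : b + 1 + a - 1 = b + a := by omega
  have e2 : b + 1 + a - (b + 1) + 1 = a + 1 := by omega
  have e3 : 2 * (b + 1 + a) - (b + 1) = b + 1 + 2 * a := by omega
  have e4 : b + 1 - 1 = b := by omega
  rw [e1] at h2x
  rw [e2] at h2y hyx ⊢
  rw [e3, e4]
  rw [Nat.add_sub_cancel] at h2y
  have hpoly : (b + 1 + a) * (b + a) = (a + 1) * a + b * (b + 1 + 2 * a) := by ring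
  have hG2le : 2 * G.card ≤ b * (b + 1 + 2 * a) := by nlinarith [hEG]
  omega
end
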